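/- For real a with |a| < 1 (in particular a = 1/2) and k ∈ (0,1), the generalized complete elliptic integral K_a(k) = (π/2) · ₂F₁(a, 1−a, 1, k²) satisfies K_a(k) < (π/2)(1 − (sin(πa)/π) log(1 − k²)); specializing to a = 1/2 gives K(k) < (π/2)(1 − (1/π) log(1 − k²)). -/

import Mathlib

open Real

/-- The Gauss hypergeometric function ₂F₁(a, b, c, x) for real parameters,
defined by its power series. -/
noncomputable def gaussHypergeom (a b c x : ℝ) : ℝ :=
  ∑' n : ℕ, ((ascPochhammer ℝ n).eval a * (ascPochhammer ℝ n).eval b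
      / (ascPochhammer ℝ n).eval c) * x ^ n / (n.factorial : ℝ)

/-- The generalized complete elliptic integral of the first kind,
`K_a(k) = (π/2) · ₂F₁(a, 1 - a, 1, k²)`. -/
noncomputable def genEllipticK (a k : ℝ) : ℝ :=
  (π / 2) * gaussHypergeom a (1 - a) 1 (k ^ 2)

/-- The complete elliptic integral of the first kind. -/
noncomputable def ellipticK (k : ℝ) : ℝ :=
  ∫ θ in (0 : ℝ)..(π / 2), 1 / Real.sqrt (1 - k ^ 2 * Real.sin θ ^ 2)


open Filter Topology Finset Polynomial

/-!
Write `₂F₁(a, 1 - a; 1; x) = ∑ κₙ xⁿ`. The ratio `κₙ₊₁ / κₙ = (a + n)(1 - a + n) / (n + 1)²` shows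
that `n κₙ` is strictly increasing, and Euler's limit formula for `Γ` together with the reflection
formula gives `n κₙ → 1 / (Γ(a) Γ(1 - a)) = sin(πa) / π`. Hence `κₙ < sin(πa) / (πn)` for `n ≥ 1`,
and comparing termwise with `-log(1 - x) = ∑ xⁿ / n` gives the bound.

For `a = 1/2`, expanding `(1 - k² sin²θ)^(-1/2)` as a binomial series and integrating termwise
with Wallis' formula identifies the integral `K(k)` with `K_{1/2}(k)`.
-/

lemma ascPochhammer_eval_eq_prod_range {R : Type*} [CommSemiring R] (n : ℕ) (r : R) :
    (ascPochhammer R n).eval r = ∏ j ∈ range n, (r + j) := by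
  induction n with
  | zero => simp
  | succ n ih => rw [ascPochhammer_succ_eval, ih, prod_range_succ]

lemma ordinaryHypergeometricCoefficient_succ {𝕂 : Type*} [Field 𝕂] (a b c : 𝕂) (n : ℕ) :
    ordinaryHypergeometricCoefficient a b c (n + 1) =
      ordinaryHypergeometricCoefficient a b c n * ((a + n) * (b + n) / ((c + n) * (n + 1))) := by
  simp only [ordinaryHypergeometricCoefficient, ascPochhammer_succ_eval, Nat.factorial_succ,
    Nat.cast_mul, Nat.cast_succ, mul_inv, div_eq_mul_inv]
  ring

lemma ordinaryHypergeometricCoefficient_pos {a b c : ℝ} (ha : 0 < a) (hb : 0 < b) (hc : 0 < c)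
    (n : ℕ) : 0 < ordinaryHypergeometricCoefficient a b c n := by
  have := ascPochhammer_pos n a ha
  have := ascPochhammer_pos n b hb
  have := ascPochhammer_pos n c hc
  unfold ordinaryHypergeometricCoefficient
  positivity

lemma gaussHypergeom_eq_tsum (a b c x : ℝ) :
    gaussHypergeom a b c x = ∑' n, ordinaryHypergeometricCoefficient a b c n * x ^ n :=
  tsum_congr fun n => by simp only [ordinaryHypergeometricCoefficient]; ring

lemma Real.GammaSeq_eq_ascPochhammer (s : ℝ) (n : ℕ) :
    GammaSeq s n = n ^ s * n.factorial / (ascPochhammer ℝ (n + 1)).eval s := by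
  rw [GammaSeq, ascPochhammer_eval_eq_prod_range]

namespace GenEllipticK

lemma natCast_succ_mul_coeff_succ (a : ℝ) (n : ℕ) :
    (n + 1) * ordinaryHypergeometricCoefficient a (1 - a) 1 (n + 1) =
      n * ordinaryHypergeometricCoefficient a (1 - a) 1 n
        + a * (1 - a) * ordinaryHypergeometricCoefficient a (1 - a) 1 n / (n + 1) := by
  rw [ordinaryHypergeometricCoefficient_succ]
  field_simp
  ring

lemma strictMono_natCast_mul_coeff {a : ℝ} (ha : a ∈ Set.Ioo 0 1) :
    StrictMono fun n : ℕ => n * ordinaryHypergeometricCoefficient a (1 - a) 1 n := by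
  refine strictMono_nat_of_lt_succ fun n => ?_
  have := ordinaryHypergeometricCoefficient_pos ha.1 (sub_pos.2 ha.2) one_pos n
  have : 0 < a * (1 - a) := mul_pos ha.1 (sub_pos.2 ha.2)
  push_cast
  rw [natCast_succ_mul_coeff_succ]
  simp only [lt_add_iff_pos_right]
  positivity

lemma natCast_mul_coeff_eq_GammaSeq {a : ℝ} (ha : a ∈ Set.Ioo 0 1) {n : ℕ} (hn : n ≠ 0) :
    n * ordinaryHypergeometricCoefficient a (1 - a) 1 n =
      n / (n + a) * (n / (n + (1 - a))) / (GammaSeq a n * GammaSeq (1 - a) n) := by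
  have hn : (0 : ℝ) < n := by positivity
  have := ascPochhammer_pos n a ha.1
  have := ascPochhammer_pos n (1 - a) (sub_pos.2 ha.2)
  have : (0 : ℝ) < n + a := by linarith [ha.1]
  have : (0 : ℝ) < n + (1 - a) := by linarith [ha.2]
  have hGammaSeq : GammaSeq a n * GammaSeq (1 - a) n = n * n.factorial ^ 2 /
      ((ascPochhammer ℝ n).eval a * (a + n) *
        ((ascPochhammer ℝ n).eval (1 - a) * (1 - a + n))) := by
    rw [GammaSeq_eq_ascPochhammer, GammaSeq_eq_ascPochhammer, ascPochhammer_succ_eval,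
      ascPochhammer_succ_eval, div_mul_div_comm, mul_mul_mul_comm, ← rpow_add hn, add_sub_cancel,
      rpow_one, sq, mul_assoc]
  rw [hGammaSeq, ordinaryHypergeometricCoefficient, ascPochhammer_eval_one]
  field_simp
  ring

lemma tendsto_natCast_mul_coeff {a : ℝ} (ha : a ∈ Set.Ioo 0 1) :
    Tendsto (fun n : ℕ => n * ordinaryHypergeometricCoefficient a (1 - a) 1 n) atTop
      (𝓝 (sin (π * a) / π)) := by
  have hlim : Tendsto (fun n : ℕ => n / (n + a) * (n / (n + (1 - a))) /
      (GammaSeq a n * GammaSeq (1 - a) n)) atTop (𝓝 (1 * 1 / (Gamma a * Gamma (1 - a)))) :=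
    ((tendsto_natCast_div_add_atTop a).mul (tendsto_natCast_div_add_atTop (1 - a))).div
      ((GammaSeq_tendsto_Gamma a).mul (GammaSeq_tendsto_Gamma (1 - a)))
      (mul_pos (Gamma_pos_of_pos ha.1) (Gamma_pos_of_pos (sub_pos.2 ha.2))).ne'
  rw [Gamma_mul_Gamma_one_sub, one_mul, one_div_div] at hlim
  exact hlim.congr' <| (eventually_ne_atTop 0).mono fun n hn =>
    (natCast_mul_coeff_eq_GammaSeq ha hn).symm

lemma natCast_mul_coeff_lt {a : ℝ} (ha : a ∈ Set.Ioo 0 1) (n : ℕ) :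
    n * ordinaryHypergeometricCoefficient a (1 - a) 1 n < sin (π * a) / π :=
  (strictMono_natCast_mul_coeff ha n.lt_succ_self).trans_le <|
    (strictMono_natCast_mul_coeff ha).monotone.ge_of_tendsto (tendsto_natCast_mul_coeff ha) _

end GenEllipticK

lemma tsum_lt_one_sub_mul_log {c : ℕ → ℝ} {s x : ℝ} (hc_zero : c 0 = 1) (hc_nonneg : ∀ n, 0 ≤ c n)
    (hc : ∀ n : ℕ, (n + 1) * c (n + 1) < s) (hx₀ : 0 < x) (hx₁ : x < 1) :
    ∑' n, c n * x ^ n < 1 - s * log (1 - x) := by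
  have hlog : HasSum (fun n : ℕ => s * (x ^ (n + 1) / (n + 1))) (s * -log (1 - x)) :=
    (hasSum_pow_div_log_of_abs_lt_one (abs_lt.2 ⟨by linarith, hx₁⟩)).mul_left s
  have hlt : ∀ n : ℕ, c (n + 1) * x ^ (n + 1) < s * (x ^ (n + 1) / (n + 1)) := fun n => by
    rw [mul_div_assoc', lt_div_iff₀ (by positivity), mul_right_comm, mul_comm (c (n + 1))]
    exact mul_lt_mul_of_pos_right (hc n) (pow_pos hx₀ _)
  have hsum : Summable fun n => c (n + 1) * x ^ (n + 1) :=
    hlog.summable.of_nonneg_of_le (fun n => mul_nonneg (hc_nonneg _) (pow_pos hx₀ _).le)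
      fun n => (hlt n).le
  have htail := hasSum_lt (f := fun n => c (n + 1) * x ^ (n + 1)) (fun n => (hlt n).le) (hlt 0)
    hsum.hasSum hlog
  have hsum₀ : Summable fun n => c n * x ^ n := (summable_nat_add_iff 1).1 hsum
  rw [hsum₀.tsum_eq_zero_add, hc_zero, pow_zero, mul_one]
  linarith

lemma gaussHypergeom_lt {a x : ℝ} (ha : a ∈ Set.Ioo 0 1) (hx₀ : 0 < x) (hx₁ : x < 1) :
    gaussHypergeom a (1 - a) 1 x < 1 - sin (π * a) / π * log (1 - x) := by
  rw [gaussHypergeom_eq_tsum]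
  refine tsum_lt_one_sub_mul_log (by simp [ordinaryHypergeometricCoefficient])
    (fun n => (ordinaryHypergeometricCoefficient_pos ha.1 (sub_pos.2 ha.2) one_pos n).le)
    (fun n => ?_) hx₀ hx₁
  exact_mod_cast GenEllipticK.natCast_mul_coeff_lt ha (n + 1)

lemma Ring.choose_add_sub_one_eq_ascPochhammer {𝕂 : Type*} [Field 𝕂] [CharZero 𝕂] (r : 𝕂) (n : ℕ) :
    Ring.choose (r + n - 1) n = (ascPochhammer 𝕂 n).eval r / n.factorial := by
  rw [Ring.choose_eq_smul, descPochhammer_smeval_eq_ascPochhammer, ascPochhammer_smeval_cast,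
     ascPochhammer_smeval_eq_eval, smul_eq_mul, inv_mul_eq_div]
  congr 2
  ring

lemma hasSum_one_div_sqrt_one_sub {y : ℝ} (hy : |y| < 1) :
    HasSum (fun n : ℕ => (ascPochhammer ℝ n).eval (1 / 2) / n.factorial * y ^ n)
      (1 / √(1 - y)) := by
  have := (one_div_one_sub_rpow_hasFPowerSeriesOnBall_zero (1 / 2)).hasSum (y := y)
    (by simpa [enorm_eq_nnnorm, ← NNReal.coe_lt_one] using hy)
  simpa [FormalMultilinearSeries.ofScalars_apply_eq, Ring.choose_add_sub_one_eq_ascPochhammer,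
    sqrt_eq_rpow, mul_comm] using this

lemma integral_sin_pow_two_mul_zero_pi_div_two (n : ℕ) :
    ∫ θ in (0 : ℝ)..(π / 2), sin θ ^ (2 * n) =
      π / 2 * ((ascPochhammer ℝ n).eval (1 / 2) / n.factorial) := by
  induction n with
  | zero => simp
  | succ n ih =>
    rw [mul_add_one, integral_sin_pow, ih, sin_zero, cos_pi_div_two, ascPochhammer_succ_eval,
      Nat.factorial_succ]
    push_cast
    field_simp
    ring

lemma hasSum_ellipticK {k : ℝ} (hk : |k| < 1) :
    HasSum (fun n : ℕ => π / 2 * ((ascPochhammer ℝ n).eval (1 / 2) / n.factorial) ^ 2 *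
      (k ^ 2) ^ n) (ellipticK k) := by
  set β : ℕ → ℝ := fun n => (ascPochhammer ℝ n).eval (1 / 2) / n.factorial
  have hβ : ∀ n, 0 ≤ β n := fun n => by
    have := ascPochhammer_pos n (1 / 2 : ℝ) one_half_pos
    positivity
  have hk2 : k ^ 2 < 1 := by rwa [sq_lt_one_iff_abs_lt_one]
  have hy : ∀ θ, |k ^ 2 * sin θ ^ 2| < 1 := fun θ => by
    rw [abs_of_nonneg (by positivity)]
    exact (mul_le_of_le_one_right (sq_nonneg k) (sin_sq_le_one θ)).trans_lt hk2
  have := intervalIntegral.hasSum_integral_of_dominated_convergence (μ := MeasureTheory.volume)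
    (a := 0) (b := π / 2) (F := fun n θ => β n * (k ^ 2 * sin θ ^ 2) ^ n)
    (f := fun θ => 1 / √(1 - k ^ 2 * sin θ ^ 2)) (fun n _ => β n * (k ^ 2) ^ n)
    (fun n => by fun_prop) (fun n => .of_forall fun θ _ => ?_)
    (.of_forall fun _ _ =>
      (hasSum_one_div_sqrt_one_sub (abs_lt.2 ⟨by linarith [sq_nonneg k], hk2⟩)).summable)
    intervalIntegrable_const (.of_forall fun θ _ => hasSum_one_div_sqrt_one_sub (hy θ))
  · have hterm : ∀ n, ∫ θ in (0 : ℝ)..(π / 2), β n * (k ^ 2 * sin θ ^ 2) ^ n =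
        π / 2 * β n ^ 2 * (k ^ 2) ^ n := fun n => by
      simp_rw [mul_pow, ← pow_mul, intervalIntegral.integral_const_mul,
        integral_sin_pow_two_mul_zero_pi_div_two]
      ring
    simp only [hterm] at this
    exact this
  · rw [norm_mul, norm_of_nonneg (hβ n), norm_pow, norm_of_nonneg (by positivity)]
    exact mul_le_mul_of_nonneg_left (pow_le_pow_left₀ (by positivity)
      (mul_le_of_le_one_right (sq_nonneg k) (sin_sq_le_one θ)) n) (hβ n)

lemma ellipticK_eq_genEllipticK_half {k : ℝ} (hk : |k| < 1) :
    ellipticK k = genEllipticK (1 / 2) k := by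
  rw [(hasSum_ellipticK hk).tsum_eq.symm, genEllipticK, gaussHypergeom_eq_tsum, ← tsum_mul_left]
  refine tsum_congr fun n => ?_
  norm_num [ordinaryHypergeometricCoefficient]
  ring

theorem genEllipticK_lt (a k : ℝ) (ha : a ∈ Set.Ioo (0 : ℝ) 1)
    (hk : k ∈ Set.Ioo (0 : ℝ) 1) :
    genEllipticK a k < (π / 2) * (1 - (Real.sin (π * a) / π) * Real.log (1 - k ^ 2))
      ∧ ellipticK k < (π / 2) * (1 - (1 / π) * Real.log (1 - k ^ 2)) := by
  have hk₀ : 0 < k ^ 2 := pow_pos hk.1 2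
  have hk₁ : k ^ 2 < 1 := pow_lt_one₀ hk.1.le hk.2 two_ne_zero
  have hgen : ∀ a ∈ Set.Ioo (0 : ℝ) 1,
      genEllipticK a k < (π / 2) * (1 - (Real.sin (π * a) / π) * Real.log (1 - k ^ 2)) :=
    fun a ha => mul_lt_mul_of_pos_left (gaussHypergeom_lt ha hk₀ hk₁) (by positivity)
  refine ⟨hgen a ha, ?_⟩
  have hhalf := hgen (1 / 2) ⟨one_half_pos, one_half_lt_one⟩
  rwa [mul_one_div, sin_pi_div_two, ← ellipticK_eq_genEllipticK_half
    (abs_lt.2 ⟨by linarith [hk.1], hk.2⟩)] at hhalf
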